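/- In the game G(m,n,γ) with integers m, n and integer discount factor γ > 1 with n ≥ 1, where both agents have maximization goals (each agent strictly prefers plays giving him strictly greater cumulative reward, and a strategy profile is a pure Nash equilibrium if no agent has a unilateral deviation yielding a play he strictly prefers): a pure Nash equilibrium exists, and every pure Nash equilibrium has primary trace q1, q2, q2, q2, …, giving Agent 0 cumulative reward n and Agent 1 cumulative reward 0. -/
import Mathlib


/-- The four states of the game `G(m,n,γ)` from the motivating example. -/
inductive St | q1 | q2 | q3 | q4
deriving DecidableEq

/-- The moves of `G(m,n,γ)`: `q1→q2`, `q1→q3`, `q2→q2`, `q3→q3`, `q3→q4`, `q4→q4`.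
State `q1` is controlled by Agent 0; states `q2, q3, q4` by Agent 1. -/
def Edge : St → St → Prop
  | .q1, .q2 => True
  | .q1, .q3 => True
  | .q2, .q2 => True
  | .q3, .q3 => True
  | .q3, .q4 => True
  | .q4, .q4 => True
  | _, _ => False

/-- Agent 0's reward on each move: `n` on `q1→q2`, `m` on `q3→q4`, `0` otherwise. -/
def rew0 (m n : ℤ) : St → St → ℤ
  | .q1, .q2 => n
  | .q3, .q4 => m
  | _, _ => 0

/-- Agent 1's reward on each move: `1` on `q3→q3`, `0` otherwise. -/
def rew1 : St → St → ℤ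
  | .q3, .q3 => 1
  | _, _ => 0

/-- A strategy in the turn-based game: maps the finite history (list of previously
visited states) and the current state to a successor state. -/
def Strat : Type := List St → St → St

/-- A strategy is legal if it always chooses a successor along an edge of the game. -/
def Legal (s : Strat) : Prop := ∀ (h : List St) (v : St), Edge v (s h v)

/-- History and current state after `j` steps when Agent 0 follows `s0` (at `q1`) and
Agent 1 follows `s1` (at `q2, q3, q4`), starting at the initial state `q1`. -/
def playAux (s0 s1 : Strat) : ℕ → List St × St
  | 0 => ([], St.q1)
  | j + 1 =>
      let p : List St × St := playAux s0 s1 j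
      (p.1 ++ [p.2], if p.2 = St.q1 then s0 p.1 p.2 else s1 p.1 p.2)

/-- The primary trace of a strategy profile `(s0, s1)` (state at step `j`). -/
def play (s0 s1 : Strat) (j : ℕ) : St := (playAux s0 s1 j).2

/-- Cumulative discounted reward of Agent 0 on a play `ρ`. -/
noncomputable def cum0 (m n γ : ℤ) (ρ : ℕ → St) : ℝ :=
  ∑' j : ℕ, (rew0 m n (ρ j) (ρ (j + 1)) : ℝ) / (γ : ℝ) ^ j

/-- Cumulative discounted reward of Agent 1 on a play `ρ`. -/
noncomputable def cum1 (γ : ℤ) (ρ : ℕ → St) : ℝ :=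
  ∑' j : ℕ, (rew1 (ρ j) (ρ (j + 1)) : ℝ) / (γ : ℝ) ^ j

/-- Pure Nash equilibrium under maximization goals: both strategies are legal and no
agent has a legal unilateral deviation yielding strictly greater cumulative reward. -/
def MaxNE (m n γ : ℤ) (s0 s1 : Strat) : Prop :=
  Legal s0 ∧ Legal s1 ∧
  (∀ s0' : Strat, Legal s0' → cum0 m n γ (play s0' s1) ≤ cum0 m n γ (play s0 s1)) ∧
  (∀ s1' : Strat, Legal s1' → cum1 γ (play s0 s1') ≤ cum1 γ (play s0 s1))


/-! ### Auxiliary lemmas -/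

lemma edge_from_q2 {x : St} (h : Edge .q2 x) : x = .q2 := by cases x <;> simp [Edge] at h ⊢
lemma edge_from_q1 {x : St} (h : Edge .q1 x) : x = .q2 ∨ x = .q3 := by
  cases x <;> simp [Edge] at h ⊢
lemma edge_to_q4 {x : St} (h : Edge x .q4) : x = .q3 ∨ x = .q4 := by
  cases x <;> simp [Edge] at h ⊢

lemma rew1_nonneg (a b : St) : (0:ℤ) ≤ rew1 a b := by cases a <;> cases b <;> simp [rew1]
lemma rew1_le_one (a b : St) : rew1 a b ≤ 1 := by cases a <;> cases b <;> simp [rew1]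
lemma rew1_to_q4 (a : St) : rew1 a .q4 = 0 := by cases a <;> simp [rew1]

lemma play_zero (s0 s1 : Strat) : play s0 s1 0 = .q1 := rfl

lemma play_succ (s0 s1 : Strat) (j : ℕ) :
    play s0 s1 (j+1) =
      (if (playAux s0 s1 j).2 = St.q1 then s0 (playAux s0 s1 j).1 (playAux s0 s1 j).2
       else s1 (playAux s0 s1 j).1 (playAux s0 s1 j).2) := rfl

lemma edge_play {s0 s1 : Strat} (h0 : Legal s0) (h1 : Legal s1) (j : ℕ) :
    Edge (play s0 s1 j) (play s0 s1 (j+1)) := by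
  rw [play_succ]
  split
  · exact h0 _ _
  · exact h1 _ _

lemma play_one (s0 s1 : Strat) : play s0 s1 1 = s0 [] .q1 := by
  rw [play_succ]; simp [playAux]

lemma play_stay_q2 {s0 s1 : Strat} (h0 : Legal s0) (h1 : Legal s1)
    (h : play s0 s1 1 = .q2) : ∀ j, 1 ≤ j → play s0 s1 j = .q2 := by
  have key : ∀ k, play s0 s1 (k+1) = .q2 := by
    intro k
    induction k with
    | zero => exact h
    | succ k ih => exact edge_from_q2 (ih ▸ edge_play h0 h1 (k+1))
  intro j hj
  obtain ⟨k, rfl⟩ := Nat.exists_eq_add_of_le hj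
  rw [Nat.add_comm]; exact key k

/-- The "stay" strategy: go to `q2` from `q1`, stay put elsewhere. -/
def sStay : Strat := fun _ v =>
  match v with
  | .q1 => .q2
  | .q2 => .q2
  | .q3 => .q3
  | .q4 => .q4

lemma legal_sStay : Legal sStay := by
  intro h v; cases v <;> simp [sStay, Edge]

lemma play_sStay_q3 {s0 : Strat} (h : play s0 sStay 1 = .q3) :
    ∀ j, 1 ≤ j → play s0 sStay j = .q3 := by
  have key : ∀ k, play s0 sStay (k+1) = .q3 := by
    intro k
    induction k with
    | zero => exact h
    | succ k ih =>
      rw [play_succ]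
      have h2 : (playAux s0 sStay (k+1)).2 = St.q3 := ih
      rw [h2]; simp [sStay]
  intro j hj
  obtain ⟨k, rfl⟩ := Nat.exists_eq_add_of_le hj
  rw [Nat.add_comm]; exact key k

lemma play_stay_q3 {s0 s1 : Strat} (h0 : Legal s0) (h1 : Legal s1)
    (h : play s0 s1 1 = .q3) (hq4 : ∀ j, play s0 s1 j ≠ .q4) :
    ∀ j, 1 ≤ j → play s0 s1 j = .q3 := by
  have key : ∀ k, play s0 s1 (k+1) = .q3 := by
    intro k
    induction k with
    | zero => exact h
    | succ k ih =>
      have he := edge_play h0 h1 (k+1)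
      rw [ih] at he
      cases hx : play s0 s1 (k+1+1) with
      | q1 => rw [hx] at he; simp [Edge] at he
      | q2 => rw [hx] at he; simp [Edge] at he
      | q3 => rfl
      | q4 => exact absurd hx (hq4 (k+1+1))
  intro j hj
  obtain ⟨k, rfl⟩ := Nat.exists_eq_add_of_le hj
  rw [Nat.add_comm]; exact key k

/-! ### Cumulative reward computations -/

lemma one_lt_gammaR {γ : ℤ} (hγ : 1 < γ) : (1:ℝ) < (γ:ℝ) := by exact_mod_cast hγ

lemma summable_cum1 {γ : ℤ} (hγ : 1 < γ) (ρ : ℕ → St) :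
    Summable (fun j => (rew1 (ρ j) (ρ (j + 1)) : ℝ) / (γ : ℝ) ^ j) := by
  have hγR := one_lt_gammaR hγ
  have hγ0 : (0:ℝ) < (γ:ℝ) := lt_trans one_pos hγR
  have hg : Summable (fun j : ℕ => ((γ:ℝ)⁻¹) ^ j) :=
    summable_geometric_of_lt_one (by positivity) (inv_lt_one_of_one_lt₀ hγR)
  apply Summable.of_nonneg_of_le _ _ hg
  · intro j
    apply div_nonneg _ (by positivity)
    exact_mod_cast rew1_nonneg _ _
  · intro j
    rw [inv_pow, inv_eq_one_div]
    apply div_le_div_of_nonneg_right _ (by positivity)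
    exact_mod_cast rew1_le_one _ _

lemma cum0_q2trace {m n γ : ℤ} (ρ : ℕ → St) (h0 : ρ 0 = .q1)
    (h : ∀ j, 1 ≤ j → ρ j = .q2) : cum0 m n γ ρ = (n:ℝ) := by
  rw [cum0, tsum_eq_single 0]
  · rw [h0, h 1 le_rfl]; simp [rew0]
  · intro b hb
    obtain ⟨k, rfl⟩ : ∃ k, b = k + 1 := ⟨b - 1, by omega⟩
    rw [h (k+1) (by omega), h (k+2) (by omega)]
    simp [rew0]

lemma cum1_q2trace {γ : ℤ} (ρ : ℕ → St) (h0 : ρ 0 = .q1)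
    (h : ∀ j, 1 ≤ j → ρ j = .q2) : cum1 γ ρ = 0 := by
  rw [cum1]
  convert tsum_zero with j
  match j with
  | 0 => rw [h0, h 1 le_rfl]; simp [rew1]
  | k + 1 => rw [h (k+1) (by omega), h (k+2) (by omega)]; simp [rew1]

lemma cum0_q3trace {m n γ : ℤ} (ρ : ℕ → St) (h0 : ρ 0 = .q1)
    (h : ∀ j, 1 ≤ j → ρ j = .q3) : cum0 m n γ ρ = 0 := by
  rw [cum0]
  convert tsum_zero with j
  match j with
  | 0 => rw [h0, h 1 le_rfl]; simp [rew0]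
  | k + 1 => rw [h (k+1) (by omega), h (k+2) (by omega)]; simp [rew0]

/-- Strict comparison: any play that ever reaches `q4` gives Agent 1 strictly less
than the play staying in `q3` forever. -/
lemma cum1_lt_q3trace {γ : ℤ} (hγ : 1 < γ) (ρ ρ' : ℕ → St)
    (h0 : ρ 0 = .q1) (h0' : ρ' 0 = .q1)
    (h' : ∀ j, 1 ≤ j → ρ' j = .q3)
    (i : ℕ) (hi : 1 ≤ i) (hiq4 : ρ (i+1) = .q4) :
    cum1 γ ρ < cum1 γ ρ' := by
  have hγR := one_lt_gammaR hγ
  have hγ0 : (0:ℝ) < (γ:ℝ) := lt_trans one_pos hγR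
  apply Summable.tsum_lt_tsum (i := i) _ _ (summable_cum1 hγ ρ) (summable_cum1 hγ ρ')
  · intro j
    dsimp only
    match j with
    | 0 =>
      rw [h0, h0', h' 1 le_rfl]
      cases hρ1 : ρ 1 <;> simp [rew1]
    | k + 1 =>
      rw [h' (k+1) (by omega), h' (k+2) (by omega)]
      simp only [rew1, Int.cast_one]
      apply div_le_div_of_nonneg_right _ (by positivity)
      exact_mod_cast rew1_le_one _ _
  · rw [hiq4, rew1_to_q4, h' i hi, h' (i+1) (by omega)]
    simp only [rew1, Int.cast_zero, Int.cast_one, zero_div]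
    positivity

/-- In `G(m,n,γ)` with integer `γ > 1` and `n ≥ 1`, under maximization
goals a pure Nash equilibrium exists, and every pure Nash equilibrium has primary trace
`q1, q2, q2, …`, giving Agent 0 cumulative reward `n` and Agent 1 cumulative reward `0`. -/
theorem maxNE_exists_and_unique_trace (m n γ : ℤ) (hγ : 1 < γ) (hn : 1 ≤ n) :
    (∃ s0 s1 : Strat, MaxNE m n γ s0 s1) ∧
    (∀ s0 s1 : Strat, MaxNE m n γ s0 s1 →
      (play s0 s1 0 = St.q1 ∧ ∀ j : ℕ, 1 ≤ j → play s0 s1 j = St.q2) ∧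
      cum0 m n γ (play s0 s1) = (n : ℝ) ∧
      cum1 γ (play s0 s1) = 0) := by
  have hγR : (1:ℝ) < (γ:ℝ) := by exact_mod_cast hγ
  have hnR : (1:ℝ) ≤ (n:ℝ) := by exact_mod_cast hn
  -- the key fact: every NE has the trace q1, q2, q2, ...
  have key : ∀ s0 s1 : Strat, MaxNE m n γ s0 s1 →
      (play s0 s1 0 = St.q1 ∧ ∀ j : ℕ, 1 ≤ j → play s0 s1 j = St.q2) ∧
      cum0 m n γ (play s0 s1) = (n : ℝ) ∧
      cum1 γ (play s0 s1) = 0 := by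
    intro s0 s1 ⟨h0, h1, hd0, hd1⟩
    have h1cases := edge_from_q1 (play_zero s0 s1 ▸ edge_play h0 h1 0)
    have hq2 : play s0 s1 1 = St.q2 := by
      rcases h1cases with hq2 | hq3
      · exact hq2
      · -- play 1 = q3: derive a contradiction with the NE property
        exfalso
        by_cases hq4 : ∃ j, play s0 s1 j = St.q4
        · -- Agent 1 profits by staying at q3 forever
          obtain ⟨j, hj⟩ := hq4
          -- j ≥ 2
          have hj2 : 2 ≤ j := by
            match j, hj with
            | 0, hj => exact absurd hj (by simp [play_zero])
            | 1, hj => rw [hq3] at hj; exact absurd hj (by simp)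
            | (k+2), hj => omega
          obtain ⟨i, rfl⟩ : ∃ i, j = i + 1 := ⟨j - 1, by omega⟩
          have hdev : play s0 sStay 1 = St.q3 := by
            rw [play_one]; rw [play_one] at hq3; exact hq3
          have hlt : cum1 γ (play s0 s1) < cum1 γ (play s0 sStay) :=
            cum1_lt_q3trace hγ _ _ (play_zero _ _) (play_zero _ _)
              (play_sStay_q3 hdev) i (by omega) hj
          exact absurd (hd1 sStay legal_sStay) (not_le.mpr hlt)
        · -- Agent 0 profits by going to q2
          push_neg at hq4
          have hstay := play_stay_q3 h0 h1 hq3 hq4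
          have hc0 : cum0 m n γ (play s0 s1) = 0 := cum0_q3trace _ (play_zero _ _) hstay
          have hdev : play sStay s1 1 = St.q2 := by rw [play_one]; rfl
          have hc0' : cum0 m n γ (play sStay s1) = (n:ℝ) :=
            cum0_q2trace _ (play_zero _ _) (play_stay_q2 legal_sStay h1 hdev)
          have := hd0 sStay legal_sStay
          rw [hc0, hc0'] at this
          linarith
    have hall := play_stay_q2 h0 h1 hq2
    exact ⟨⟨play_zero _ _, hall⟩,
      cum0_q2trace _ (play_zero _ _) hall,
      cum1_q2trace _ (play_zero _ _) hall⟩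
  refine ⟨⟨sStay, sStay, legal_sStay, legal_sStay, ?_, ?_⟩, key⟩
  · -- no profitable deviation for Agent 0
    intro s0' hs0'
    have hne : play sStay sStay 1 = St.q2 := by rw [play_one]; rfl
    have hval : cum0 m n γ (play sStay sStay) = (n:ℝ) :=
      cum0_q2trace _ (play_zero _ _) (play_stay_q2 legal_sStay legal_sStay hne)
    rw [hval]
    have h1cases := edge_from_q1 (play_zero s0' sStay ▸ edge_play hs0' legal_sStay 0)
    rcases h1cases with hq2 | hq3
    · rw [cum0_q2trace _ (play_zero _ _) (play_stay_q2 hs0' legal_sStay hq2)]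
    · rw [cum0_q3trace _ (play_zero _ _) (play_sStay_q3 hq3)]
      linarith
  · -- no profitable deviation for Agent 1
    intro s1' hs1'
    have hne : play sStay s1' 1 = St.q2 := by rw [play_one]; rfl
    have hne' : play sStay sStay 1 = St.q2 := by rw [play_one]; rfl
    rw [cum1_q2trace _ (play_zero _ _) (play_stay_q2 legal_sStay hs1' hne),
      cum1_q2trace _ (play_zero _ _) (play_stay_q2 legal_sStay legal_sStay hne')]
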